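/- arXiv:1610.02763 — 2 statements merged into one kernel-verified Lean document; each statement's English description precedes it below -/
import Mathlib

section
/- Let X be a nonempty set, (f_n) a pointwise bounded sequence of real-valued functions on X, and Y ⊆ X. Assume that for every g in the σ-convex hull co_σ{f_n : n ≥ 1} (i.e. every function g = Σ λ_n f_n with λ_n ≥ 0 and Σ λ_n = 1, the series converging pointwise absolutely) there exists y ∈ Y with g(y) = inf_X g. Then inf over X of (liminf_n f_n) equals inf over Y of (liminf_n f_n). -/
/-!
Fix `x` and `ε > 0` and keep only the indices `S = {k | f k x < liminf f x + ε}`; every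
σ-convex combination `g` of these `f k` satisfies `inf_X g ≤ g x ≤ liminf f x + ε`.
Following Simons, choose probability weights `μ n` on `S ∩ (n, ∞)` greedily, each nearly
maximising `inf_X` of the combination with weights `Λ n + 2⁻ⁿ μ n`, where
`Λ n = ∑_{j<n} 2^{-(j+1)} μ j`, and let `y ∈ Y` minimise the combination with weights
`ρ 0 = ∑_j 2^{-(j+1)} μ j`. Since `ρ 0 = Λ n + 2⁻ⁿ ρ n` for the tail mixtures `ρ n`,
near-optimality gives `(ρ n · f) y ≤ (μ n · f) y + O(2⁻ⁿ ε)`, while `ρ n = (μ n + ρ (n+1)) / 2`.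
As `(ρ n · f) y` is bounded, `(μ n · f) y ≤ (ρ 0 · f) y + O(ε)` for infinitely many `n`,
so `f k y ≤ liminf f x + O(ε)` for infinitely many `k`.
-/

open Filter

structure IsWeight (s : Set ℕ) (a : ℝ) (μ : ℕ → ℝ) : Prop where
  nonneg : ∀ k, 0 ≤ μ k
  hasSum : HasSum μ a
  eq_zero_of_notMem : ∀ k ∉ s, μ k = 0

namespace IsWeight

variable {s t : Set ℕ} {a b : ℝ} {μ ν : ℕ → ℝ}

lemma zero : IsWeight s 0 0 :=
  ⟨fun _ => le_rfl, hasSum_zero, fun _ _ => rfl⟩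

lemma single {k : ℕ} (hk : k ∈ s) : IsWeight s 1 (Pi.single k 1) where
  nonneg j := by by_cases h : j = k <;> simp [h]
  hasSum := hasSum_pi_single k 1
  eq_zero_of_notMem j hj := Pi.single_eq_of_ne (by rintro rfl; exact hj hk) 1

lemma mono (h : IsWeight s a μ) (hst : s ⊆ t) : IsWeight t a μ :=
  ⟨h.nonneg, h.hasSum, fun k hk => h.eq_zero_of_notMem k fun hs => hk (hst hs)⟩

lemma add (hμ : IsWeight s a μ) (hν : IsWeight s b ν) : IsWeight s (a + b) (μ + ν) :=
  ⟨fun k => add_nonneg (hμ.nonneg k) (hν.nonneg k), hμ.hasSum.add hν.hasSum,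
    fun k hk => by simp [hμ.eq_zero_of_notMem k hk, hν.eq_zero_of_notMem k hk]⟩

lemma smul (h : IsWeight s a μ) {c : ℝ} (hc : 0 ≤ c) : IsWeight s (c * a) (c • μ) :=
  ⟨fun k => mul_nonneg hc (h.nonneg k), h.hasSum.mul_left c,
    fun k hk => by simp [h.eq_zero_of_notMem k hk]⟩

lemma le (h : IsWeight s a μ) (k : ℕ) : μ k ≤ a :=
  le_hasSum h.hasSum k fun j _ => h.nonneg j

lemma summable_mul_apply {c : ℕ → ℝ} (hc0 : ∀ j, 0 ≤ c j) (hc : Summable c)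
    {μ : ℕ → ℕ → ℝ} (hμ : ∀ j, IsWeight s 1 (μ j)) (k : ℕ) :
    Summable fun j => c j * μ j k :=
  Summable.of_nonneg_of_le (fun j => mul_nonneg (hc0 j) ((hμ j).nonneg k))
    (fun j => mul_le_of_le_one_right (hc0 j) ((hμ j).le k)) hc

lemma tsum {c : ℕ → ℝ} (hc0 : ∀ j, 0 ≤ c j) (hc : HasSum c a) {μ : ℕ → ℕ → ℝ}
    (hμ : ∀ j, IsWeight s 1 (μ j)) : IsWeight s a fun k => ∑' j, c j * μ j k := by
  set g : ℕ × ℕ → ℝ := fun p => c p.1 * μ p.1 p.2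
  have hfiber : ∀ j, HasSum (fun k => g (j, k)) (c j) := fun j => by
    simpa using (hμ j).hasSum.mul_left (c j)
  have hg : Summable g := (summable_prod_of_nonneg fun p => mul_nonneg (hc0 _) ((hμ _).nonneg _)).2
    ⟨fun j => (hfiber j).summable, hc.summable.congr fun j => (hfiber j).tsum_eq.symm⟩
  have hga : HasSum g a := by
    rw [hc.unique (hg.hasSum.prod_fiberwise hfiber)]
    exact hg.hasSum
  refine ⟨fun k => tsum_nonneg fun j => mul_nonneg (hc0 j) ((hμ j).nonneg k), ?_, fun k hk => ?_⟩
  · exact ((Equiv.prodComm ℕ ℕ).hasSum_iff.2 hga).prod_fiberwise fun k =>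
      (summable_mul_apply hc0 hc.summable hμ k).hasSum
  · simp [(hμ _).eq_zero_of_notMem k hk]

end IsWeight

section WeightedSum

variable {X : Type*}

noncomputable def weightedSum (f : ℕ → X → ℝ) (μ : ℕ → ℝ) (z : X) : ℝ :=
  ∑' k, μ k * f k z

variable {f : ℕ → X → ℝ} {z : X} {M : ℝ} {s t : Set ℕ} {a b : ℝ} {μ ν : ℕ → ℝ}

lemma IsWeight.summable_mul (h : IsWeight s a μ) (hM : ∀ k, |f k z| ≤ M) :
    Summable fun k => μ k * f k z :=
  Summable.of_norm_bounded (h.hasSum.summable.mul_right M) fun k => by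
    rw [Real.norm_eq_abs, abs_mul, abs_of_nonneg (h.nonneg k)]
    exact mul_le_mul_of_nonneg_left (hM k) (h.nonneg k)

lemma IsWeight.hasSum_weightedSum (h : IsWeight s a μ) (hM : ∀ k, |f k z| ≤ M) :
    HasSum (fun k => μ k * f k z) (weightedSum f μ z) :=
  (h.summable_mul hM).hasSum

lemma weightedSum_add (hμ : IsWeight s a μ) (hν : IsWeight t b ν) (hM : ∀ k, |f k z| ≤ M) :
    weightedSum f (μ + ν) z = weightedSum f μ z + weightedSum f ν z := by
  simp only [weightedSum, Pi.add_apply, add_mul]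
  exact (hμ.summable_mul hM).tsum_add (hν.summable_mul hM)

lemma weightedSum_smul (c : ℝ) (μ : ℕ → ℝ) (z : X) :
    weightedSum f (c • μ) z = c * weightedSum f μ z := by
  simp only [weightedSum, Pi.smul_apply, smul_eq_mul, mul_assoc]
  exact tsum_mul_left

lemma IsWeight.weightedSum_le (h : IsWeight s a μ) (hM : ∀ k, |f k z| ≤ M) {C : ℝ}
    (hC : ∀ k ∈ s, f k z ≤ C) : weightedSum f μ z ≤ a * C := by
  refine hasSum_le (fun k => ?_) (h.hasSum_weightedSum hM) (h.hasSum.mul_right C)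
  by_cases hk : k ∈ s
  · exact mul_le_mul_of_nonneg_left (hC k hk) (h.nonneg k)
  · simp [h.eq_zero_of_notMem k hk]

lemma IsWeight.le_weightedSum (h : IsWeight s a μ) (hM : ∀ k, |f k z| ≤ M) {C : ℝ}
    (hC : ∀ k ∈ s, C ≤ f k z) : a * C ≤ weightedSum f μ z := by
  refine hasSum_le (fun k => ?_) (h.hasSum.mul_right C) (h.hasSum_weightedSum hM)
  by_cases hk : k ∈ s
  · exact mul_le_mul_of_nonneg_left (hC k hk) (h.nonneg k)
  · simp [h.eq_zero_of_notMem k hk]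

end WeightedSum

lemma hasSum_inv_two_pow_succ : HasSum (fun j : ℕ => (2⁻¹ : ℝ) ^ (j + 1)) 1 := by
  have h := (hasSum_geometric_of_lt_one (r := (2⁻¹ : ℝ)) (by norm_num) (by norm_num)).mul_left 2⁻¹
  rw [show (2⁻¹ : ℝ) * (1 - 2⁻¹)⁻¹ = 1 by norm_num] at h
  simpa only [pow_succ'] using h

noncomputable def dyadicHead (μ : ℕ → ℕ → ℝ) (n : ℕ) : ℕ → ℝ :=
  ∑ j ∈ Finset.range n, (2⁻¹ : ℝ) ^ (j + 1) • μ j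

noncomputable def dyadicTail (μ : ℕ → ℕ → ℝ) (n : ℕ) : ℕ → ℝ :=
  fun k => ∑' j, (2⁻¹ : ℝ) ^ (j + 1) * μ (j + n) k

section Dyadic

variable {s : Set ℕ} {μ : ℕ → ℕ → ℝ}

lemma dyadicHead_zero (μ : ℕ → ℕ → ℝ) : dyadicHead μ 0 = 0 :=
  Finset.sum_range_zero _

lemma dyadicHead_succ (μ : ℕ → ℕ → ℝ) (n : ℕ) :
    dyadicHead μ (n + 1) = dyadicHead μ n + (2⁻¹ : ℝ) ^ (n + 1) • μ n :=
  Finset.sum_range_succ _ _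

lemma exists_seq_forall_dyadicHead {Q : ℕ → (ℕ → ℝ) → (ℕ → ℝ) → Prop}
    (h : ∀ n Λ, ∃ ν, Q n Λ ν) : ∃ μ : ℕ → ℕ → ℝ, ∀ n, Q n (dyadicHead μ n) (μ n) := by
  choose next hnext using h
  let Λ : ℕ → ℕ → ℝ := fun n => Nat.rec 0 (fun m Λm => Λm + (2⁻¹ : ℝ) ^ (m + 1) • next m Λm) n
  have hΛ : ∀ n, dyadicHead (fun m => next m (Λ m)) n = Λ n := by
    intro n
    induction n with
    | zero => exact dyadicHead_zero _
    | succ n ih => rw [dyadicHead_succ, ih]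
  exact ⟨fun n => next n (Λ n), fun n => hΛ n ▸ hnext n (Λ n)⟩

lemma isWeight_dyadicHead (hμ : ∀ j, IsWeight s 1 (μ j)) (n : ℕ) :
    IsWeight s (1 - (2⁻¹ : ℝ) ^ n) (dyadicHead μ n) := by
  induction n with
  | zero => simpa [dyadicHead_zero] using IsWeight.zero
  | succ n ih =>
    rw [dyadicHead_succ]
    convert ih.add ((hμ n).smul (c := (2⁻¹ : ℝ) ^ (n + 1)) (by positivity)) using 1
    ring

lemma isWeight_dyadicTail {n : ℕ} (hμ : ∀ j, IsWeight s 1 (μ (j + n))) :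
    IsWeight s 1 (dyadicTail μ n) :=
  IsWeight.tsum (fun j => by positivity) hasSum_inv_two_pow_succ hμ

lemma dyadicTail_eq (hμ : ∀ j, IsWeight s 1 (μ j)) (n : ℕ) :
    dyadicTail μ n = (2⁻¹ : ℝ) • μ n + (2⁻¹ : ℝ) • dyadicTail μ (n + 1) := by
  ext k
  have hsum := IsWeight.summable_mul_apply (fun j => by positivity)
    hasSum_inv_two_pow_succ.summable (fun j => hμ (j + n)) k
  simp only [dyadicTail, Pi.add_apply, Pi.smul_apply, smul_eq_mul]
  rw [hsum.tsum_eq_zero_add, ← tsum_mul_left]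
  congr 1
  · simp
  · exact tsum_congr fun j => by rw [show j + 1 + n = j + (n + 1) by omega]; ring

lemma dyadicTail_zero_eq (hμ : ∀ j, IsWeight s 1 (μ j)) (n : ℕ) :
    dyadicTail μ 0 = dyadicHead μ n + (2⁻¹ : ℝ) ^ n • dyadicTail μ n := by
  ext k
  have hsum := IsWeight.summable_mul_apply (fun j => by positivity)
    hasSum_inv_two_pow_succ.summable hμ k
  simp only [dyadicTail, dyadicHead, Finset.sum_apply, Pi.add_apply, Pi.smul_apply, smul_eq_mul,
    add_zero]
  rw [← hsum.sum_add_tsum_nat_add n, ← tsum_mul_left]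
  exact congrArg _ (tsum_congr fun j => by ring)

end Dyadic

lemma frequently_lt_of_two_mul_eq {u G : ℕ → ℝ} {δ B : ℝ} (hδ : 0 < δ)
    (hmid : ∀ n, 2 * u n = G n + u (n + 1)) (hle : ∀ n, u n ≤ G n + δ * 2⁻¹ ^ n)
    (hB : ∀ n, -B ≤ u n) : ∃ᶠ n in atTop, G n < u 0 + 3 * δ := by
  have hup : ∀ n, u n ≤ u 0 + 2 * δ - 2 * δ * 2⁻¹ ^ n := by
    intro n
    induction n with
    | zero => simp
    | succ n ih =>
      rw [pow_succ]
      linarith [hmid n, hle n]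
  rw [frequently_atTop]
  intro N
  by_contra! hG
  -- once `G` stays above `K = u 0 + 3 δ`, the gap `K - u n` at least doubles at each step
  have hgrow : ∀ m, 2 ^ m * δ ≤ u 0 + 3 * δ - u (N + m) := by
    intro m
    induction m with
    | zero =>
      rw [pow_zero, one_mul, add_zero]
      linarith [hup N, show 0 ≤ 2 * δ * 2⁻¹ ^ N by positivity]
    | succ m ih =>
      rw [pow_succ, ← add_assoc]
      linarith [hmid (N + m), hG (N + m) (by omega)]
  obtain ⟨m, hm⟩ := pow_unbounded_of_one_lt ((u 0 + 3 * δ + B) / δ) (one_lt_two (α := ℝ))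
  rw [div_lt_iff₀ hδ] at hm
  linarith [hgrow m, hB (N + m)]

lemma exists_forall_le_add {α : Type*} {s : Set α} (hs : s.Nonempty) {g : α → ℝ} {c : ℝ}
    (hg : ∀ a ∈ s, g a ≤ c) {η : ℝ} (hη : 0 < η) : ∃ a ∈ s, ∀ b ∈ s, g b ≤ g a + η := by
  have hbdd : BddAbove (g '' s) := ⟨c, Set.forall_mem_image.2 hg⟩
  obtain ⟨_, ⟨a, ha, rfl⟩, hlt⟩ := exists_lt_of_lt_csSup (hs.image g) (sub_lt_self _ hη)
  exact ⟨a, ha, fun b hb => by linarith [le_csSup hbdd (Set.mem_image_of_mem g hb)]⟩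

lemma ciInf_eq_of_forall_le {ι α : Type*} [ConditionallyCompleteLattice α] {g : ι → α} {i : ι}
    (h : ∀ j, g i ≤ g j) : ⨅ j, g j = g i :=
  IsLeast.csInf_eq ⟨⟨i, rfl⟩, Set.forall_mem_range.2 h⟩

section Simons

variable {X : Type*} {f : ℕ → X → ℝ} {Y : Set X} {S : Set ℕ} {c δ : ℝ}

lemma exists_dyadicTail_le (hbdd : ∀ z, ∃ M, ∀ n, |f n z| ≤ M) (hS : S.Infinite)
    (hmin : ∀ μ, IsWeight S 1 μ → ∃ y ∈ Y, ∀ z, weightedSum f μ y ≤ weightedSum f μ z)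
    (hc : ∀ μ, IsWeight S 1 μ → ∃ z, weightedSum f μ z ≤ c) (hδ : 0 < δ) :
    ∃ μ : ℕ → ℕ → ℝ, ∃ y ∈ Y, (∀ n, IsWeight (S ∩ Set.Ioi n) 1 (μ n)) ∧
      weightedSum f (dyadicTail μ 0) y ≤ c ∧
      ∀ n, weightedSum f (dyadicTail μ n) y ≤ weightedSum f (μ n) y + δ * 2⁻¹ ^ n := by
  -- capping at `c` makes `V` bounded above everywhere, not only on weights
  let V : (ℕ → ℝ) → ℝ := fun ψ => min (⨅ z, weightedSum f ψ z) c
  have hV : ∀ ψ y, IsWeight S 1 ψ → (∀ z, weightedSum f ψ y ≤ weightedSum f ψ z) →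
      V ψ = weightedSum f ψ y := by
    intro ψ y hψ hy
    obtain ⟨z, hz⟩ := hc ψ hψ
    simp only [V, ciInf_eq_of_forall_le hy, min_eq_left ((hy z).trans hz)]
  have hV_le : ∀ ψ z, IsWeight S 1 ψ → V ψ ≤ weightedSum f ψ z := by
    intro ψ z hψ
    obtain ⟨y, -, hy⟩ := hmin ψ hψ
    exact (hV ψ y hψ hy).trans_le (hy z)
  have hP : ∀ n : ℕ, {ρ | IsWeight (S ∩ Set.Ioi n) 1 ρ}.Nonempty := fun n =>
    let ⟨k, hk, hnk⟩ := hS.exists_gt n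
    ⟨_, IsWeight.single ⟨hk, hnk⟩⟩
  obtain ⟨μ, hμ⟩ := exists_seq_forall_dyadicHead fun n Λ =>
    exists_forall_le_add (hP n) (g := fun ρ => V (Λ + (2⁻¹ : ℝ) ^ n • ρ))
      (fun _ _ => min_le_right _ _) (η := δ * ((2⁻¹ : ℝ) ^ n) ^ 2) (by positivity)
  have hμS : ∀ j, IsWeight S 1 (μ j) := fun j => (hμ j).1.mono Set.inter_subset_left
  have hρ : ∀ n, IsWeight (S ∩ Set.Ioi n) 1 (dyadicTail μ n) := fun n =>
    isWeight_dyadicTail fun j =>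
      (hμ (j + n)).1.mono (Set.inter_subset_inter_right _ (Set.Ioi_subset_Ioi (by omega)))
  have hρ₀ : IsWeight S 1 (dyadicTail μ 0) := (hρ 0).mono Set.inter_subset_left
  obtain ⟨y, hyY, hy⟩ := hmin _ hρ₀
  obtain ⟨B, hB⟩ := hbdd y
  refine ⟨μ, y, hyY, fun n => (hμ n).1, ?_, fun n => ?_⟩
  · obtain ⟨z, hz⟩ := hc _ hρ₀
    exact (hy z).trans hz
  have hΛ := isWeight_dyadicHead hμS n
  have hmix : IsWeight S 1 (dyadicHead μ n + (2⁻¹ : ℝ) ^ n • μ n) := by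
    convert hΛ.add ((hμS n).smul (c := (2⁻¹ : ℝ) ^ n) (by positivity)) using 1
    ring
  have key := calc
    weightedSum f (dyadicTail μ 0) y
      = V (dyadicHead μ n + (2⁻¹ : ℝ) ^ n • dyadicTail μ n) := by
        rw [← dyadicTail_zero_eq hμS, hV _ _ hρ₀ hy]
    _ ≤ V (dyadicHead μ n + (2⁻¹ : ℝ) ^ n • μ n) + δ * ((2⁻¹ : ℝ) ^ n) ^ 2 := (hμ n).2 _ (hρ n)
    _ ≤ weightedSum f (dyadicHead μ n + (2⁻¹ : ℝ) ^ n • μ n) y + δ * ((2⁻¹ : ℝ) ^ n) ^ 2 := by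
        gcongr
        exact hV_le _ _ hmix
  rw [dyadicTail_zero_eq hμS n, weightedSum_add hΛ ((hρ n).smul (by positivity)) hB,
    weightedSum_add hΛ ((hμS n).smul (by positivity)) hB, weightedSum_smul,
    weightedSum_smul] at key
  exact le_of_mul_le_mul_left (by linear_combination key) (by positivity : (0 : ℝ) < 2⁻¹ ^ n)

theorem exists_mem_frequently_lt (hbdd : ∀ z, ∃ M, ∀ n, |f n z| ≤ M) (hS : S.Infinite)
    (hmin : ∀ μ, IsWeight S 1 μ → ∃ y ∈ Y, ∀ z, weightedSum f μ y ≤ weightedSum f μ z)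
    (hc : ∀ μ, IsWeight S 1 μ → ∃ z, weightedSum f μ z ≤ c) (hδ : 0 < δ) :
    ∃ y ∈ Y, ∃ᶠ k in atTop, f k y < c + 3 * δ := by
  obtain ⟨μ, y, hyY, hμ, hρ₀, hle⟩ := exists_dyadicTail_le hbdd hS hmin hc hδ
  obtain ⟨B, hB⟩ := hbdd y
  have hμS : ∀ j, IsWeight S 1 (μ j) := fun j => (hμ j).mono Set.inter_subset_left
  have hρ : ∀ n, IsWeight S 1 (dyadicTail μ n) := fun n =>
    isWeight_dyadicTail fun j => hμS (j + n)
  have hmid : ∀ n, 2 * weightedSum f (dyadicTail μ n) y =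
      weightedSum f (μ n) y + weightedSum f (dyadicTail μ (n + 1)) y := fun n => by
    rw [dyadicTail_eq hμS n, weightedSum_add ((hμS n).smul (by positivity))
      ((hρ (n + 1)).smul (by positivity)) hB, weightedSum_smul, weightedSum_smul]
    ring
  have hlow : ∀ n, -B ≤ weightedSum f (dyadicTail μ n) y := fun n => by
    simpa using (hρ n).le_weightedSum hB fun k _ => (abs_le.1 (hB k)).1
  have hG := frequently_lt_of_two_mul_eq hδ hmid hle hlow
  refine ⟨y, hyY, frequently_atTop.2 fun N => ?_⟩
  obtain ⟨n, hnN, hn⟩ := frequently_atTop.1 hG N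
  by_contra! hk
  have hK : 1 * (c + 3 * δ) ≤ weightedSum f (μ n) y :=
    (hμ n).le_weightedSum hB fun k hkS => hk k (hnN.trans hkS.2.le)
  linarith

end Simons

theorem exists_mem_liminf_le {X : Type*} {f : ℕ → X → ℝ}
    (hbdd : ∀ x : X, ∃ M : ℝ, ∀ n, |f n x| ≤ M) {Y : Set X}
    (hatt : ∀ g : X → ℝ, (∃ lam : ℕ → ℝ, (∀ n, 0 ≤ lam n) ∧ HasSum lam 1 ∧
        ∀ x, HasSum (fun n => lam n * f n x) (g x)) →
      ∃ y ∈ Y, ∀ x : X, g y ≤ g x)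
    (x : X) {ε : ℝ} (hε : 0 < ε) :
    ∃ y ∈ Y, liminf (fun n => f n y) atTop ≤ liminf (fun n => f n x) atTop + ε := by
  set L := liminf (fun n => f n x) atTop
  obtain ⟨M, hM⟩ := hbdd x
  let S := {k | f k x < L + ε / 2}
  have hbddAbove : IsBoundedUnder (· ≤ ·) atTop fun n => f n x :=
    isBoundedUnder_of ⟨M, fun n => (abs_le.1 (hM n)).2⟩
  have hS : S.Infinite := Nat.frequently_atTop_iff_infinite.1 <|
    frequently_lt_of_liminf_lt hbddAbove.isCoboundedUnder_ge (by linarith)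
  have hmin : ∀ μ, IsWeight S 1 μ → ∃ y ∈ Y, ∀ z, weightedSum f μ y ≤ weightedSum f μ z :=
    fun μ hμ => hatt _
      ⟨μ, hμ.nonneg, hμ.hasSum, fun z => hμ.hasSum_weightedSum (hbdd z).choose_spec⟩
  have hc : ∀ μ, IsWeight S 1 μ → ∃ z, weightedSum f μ z ≤ L + ε / 2 :=
    fun μ hμ => ⟨x, by simpa using hμ.weightedSum_le hM fun k hk => le_of_lt hk⟩
  obtain ⟨y, hyY, hy⟩ := exists_mem_frequently_lt hbdd hS hmin hc (δ := ε / 6) (by positivity)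
  obtain ⟨B, hB⟩ := hbdd y
  exact ⟨y, hyY, liminf_le_of_frequently_le (hy.mono fun k hk => by linarith)
    (isBoundedUnder_of ⟨-B, fun n => (abs_le.1 (hB n)).1⟩)⟩

theorem inf_liminf_general {X : Type*} (f : ℕ → X → ℝ)
    (hbdd : ∀ x : X, ∃ M : ℝ, ∀ n, |f n x| ≤ M) (Y : Set X)
    (hatt : ∀ g : X → ℝ, (∃ lam : ℕ → ℝ, (∀ n, 0 ≤ lam n) ∧ HasSum lam 1 ∧
        ∀ x, HasSum (fun n => lam n * f n x) (g x)) →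
      ∃ y ∈ Y, ∀ x : X, g y ≤ g x) :
    (⨅ x : X, ((liminf (fun n => f n x) atTop : ℝ) : EReal)) =
      ⨅ y : Y, ((liminf (fun n => f n (y : X)) atTop : ℝ) : EReal) := by
  refine le_antisymm (le_iInf fun y => iInf_le _ (y : X)) (le_iInf fun x => ?_)
  refine EReal.le_of_forall_lt_iff_le.1 fun r hr => ?_
  obtain ⟨y, hyY, hy⟩ := exists_mem_liminf_le hbdd hatt x (sub_pos.2 (EReal.coe_lt_coe_iff.1 hr))
  exact (iInf_le _ ⟨y, hyY⟩).trans (EReal.coe_le_coe_iff.2 (by linarith))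

/-- Inf-liminf theorem: if every countable convex combination of the pointwise bounded
sequence `f n` attains its infimum over `X` at a point of `Y`, then the infimum of
`liminf f n` over `X` equals its infimum over `Y` (in the extended reals). -/
theorem inf_liminf {X : Type*} [Nonempty X] (f : ℕ → X → ℝ)
    (hbdd : ∀ x : X, ∃ M : ℝ, ∀ n, |f n x| ≤ M) (Y : Set X)
    (hatt : ∀ g : X → ℝ, (∃ lam : ℕ → ℝ, (∀ n, 0 ≤ lam n) ∧ HasSum lam 1 ∧
        ∀ x, HasSum (fun n => lam n * f n x) (g x)) →
      ∃ y ∈ Y, ∀ x : X, g y ≤ g x) :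
    (⨅ x : X, ((liminf (fun n => f n x) atTop : ℝ) : EReal)) =
      ⨅ y : Y, ((liminf (fun n => f n (y : X)) atTop : ℝ) : EReal) :=
  inf_liminf_general f hbdd Y hatt
end

section
/- Let E be a separable Banach space and A ⊆ E a norm-bounded set such that A (via the canonical embedding) has a weak* cluster point x₀** ∈ E** \ E. Let D ⊆ E be weakly compact convex with 0 not in the closed convex hull of A ∪ D. Then there exists a sequence (y_n*) in a multiple of B_{E*} such that: (i) y_n*(d) > β for all d ∈ D, n ∈ ℕ, for some β > 0; (ii) every y* ∈ co_σ{y_n* : n ≥ 1} satisfies y*(d) > 0 for all d ∈ D; (iii) liminf_n ⟨y_n*, x₀**⟩ ≤ α < β; and (iv) lim_n y_n*(x) exists and is > β for every x ∈ A, for some 0 < α < β. -/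
/-!
Separate `0` from the closed convex hull of `A ∪ D` by `f ∈ E*` with `f > β₀ > 0` on `A ∪ D`;
as `x₀''` is a weak* cluster point of `A`, also `x₀'' f ≥ β₀`. Since `x₀''` lies at positive
distance `δ` from the closed subspace `E` of `E**`, Hahn–Banach gives, for every finite set of
points, a functional of norm `≤ 1` vanishing on them on which `x₀''` exceeds `δ / 2`: otherwise
`x₀''` would be within `δ / 2` of their span. Along a dense sequence this gives a bounded
weak*-null sequence `(v n)` with `x₀'' (v n) > δ / 2`. Weak compactness of `D` reduces the search
for a convex combination of `(v m)_{m ≥ n}` that is uniformly small on `D` to a finite-dimensional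
separation, and such combinations `u n` inherit the other properties of `v`. Then
`y n = f - M • u n` works for a suitable `M > 0`.
-/

open NormedSpace Filter Set Topology

theorem exists_mem_stdSimplex_forall_sum_mul_lt {ι : Type*} [Fintype ι] {S : Set (ι → ℝ)}
    (hS : Convex ℝ S) (hSc : IsCompact S) (hSne : S.Nonempty) {ε : ℝ}
    (h : ∀ s ∈ S, ∃ i, s i < ε) : ∃ w ∈ stdSimplex ℝ ι, ∀ s ∈ S, ∑ i, w i * s i < ε := by
  classical
  let c : ι → ℝ := fun _ => ε
  have hdisj : Disjoint S (Ici c) := by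
    refine disjoint_left.mpr fun s hs hsε => ?_
    obtain ⟨i, hi⟩ := h s hs
    exact (hi.trans_le (hsε i)).false
  obtain ⟨f, u, u', hfS, hu, hfQ⟩ :=
    geometric_hahn_banach_compact_closed hS hSc (convex_Ici c) isClosed_Ici hdisj
  let e : ι → ι → ℝ := fun i j => if i = j then 1 else 0
  have hf : ∀ y, f y = ∑ i, y i * f (e i) := LinearMap.pi_apply_eq_sum_univ f.toLinearMap
  have hc : u' < f c := hfQ c (mem_Ici.mpr le_rfl)
  have hfe : ∀ i, 0 ≤ f (e i) := by
    intro i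
    by_contra! hi
    -- far enough along `e i`, the point `c + t • e i ∈ Ici c` would leave `{u' < f}`
    have ht : 0 ≤ (f c - u') / -f (e i) := div_nonneg (by linarith) (by linarith)
    have he : 0 ≤ e i := fun j => by simp only [e]; split_ifs <;> norm_num
    have := hfQ (c + ((f c - u') / -f (e i)) • e i) (le_add_of_nonneg_right (smul_nonneg ht he))
    rw [map_add, map_smul, smul_eq_mul, div_mul_eq_mul_div, div_neg, mul_div_cancel_right₀ _ hi.ne]
      at this
    linarith
  have hlt : ∀ s ∈ S, f s < ε * ∑ i, f (e i) := fun s hs => by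
    have hfc : f c = ε * ∑ i, f (e i) := by rw [hf c, Finset.mul_sum]
    linarith [hfS s hs]
  have hpos : 0 < ∑ i, f (e i) := by
    obtain ⟨s, hs⟩ := hSne
    refine (Finset.sum_nonneg fun i _ => hfe i).lt_of_ne fun hzero => ?_
    have h0 : ∀ i, f (e i) = 0 := fun i =>
      (Finset.sum_eq_zero_iff_of_nonneg fun i _ => hfe i).mp hzero.symm i (Finset.mem_univ i)
    have := hlt s hs
    rw [hf s] at this
    simp only [h0, mul_zero, Finset.sum_const_zero] at this
    exact this.false
  refine ⟨fun i => f (e i) / ∑ j, f (e j), ⟨fun i => div_nonneg (hfe i) hpos.le, ?_⟩,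
    fun s hs => ?_⟩
  · rw [← Finset.sum_div, div_self hpos.ne']
  · calc ∑ i, f (e i) / (∑ j, f (e j)) * s i = f s / ∑ j, f (e j) := by
          rw [hf s, Finset.sum_div]
          exact Finset.sum_congr rfl fun i _ => by ring
      _ < ε := (div_lt_iff₀ hpos).mpr (hlt s hs)

theorem tendsto_of_forall_mem_convexHull_image_Ici {X : Type*} [SeminormedAddCommGroup X]
    [NormedSpace ℝ X] {f g : ℕ → X} {a : X} (hf : Tendsto f atTop (𝓝 a))
    (hg : ∀ n, g n ∈ convexHull ℝ (f '' Ici n)) : Tendsto g atTop (𝓝 a) := by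
  rw [Metric.nhds_basis_closedBall.tendsto_right_iff] at hf ⊢
  intro r hr
  obtain ⟨N, hN⟩ := eventually_atTop.mp (hf r hr)
  refine eventually_atTop.mpr ⟨N, fun n hn => convexHull_min ?_ (convex_closedBall a r) (hg n)⟩
  rintro _ ⟨m, hm, rfl⟩
  exact hN m (hn.trans hm)

theorem ContinuousLinearMap.apply_mem_convexHull_image {F G ι : Type*} [AddCommGroup F]
    [Module ℝ F] [TopologicalSpace F] [AddCommGroup G] [Module ℝ G] [TopologicalSpace G]
    (φ : F →L[ℝ] G) {v : ι → F} {s : Set ι} {u : F} (hu : u ∈ convexHull ℝ (v '' s)) :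
    φ u ∈ convexHull ℝ ((fun n => φ (v n)) '' s) := by
  have := (φ.toLinearMap.image_convexHull (v '' s)).subset ⟨u, hu, rfl⟩
  rwa [image_image] at this

section

variable {E : Type*} [NormedAddCommGroup E] [NormedSpace ℝ E]

theorem exists_norm_le_one_forall_apply_eq_zero_lt_apply {ι : Type*} [Finite ι] (e : ι → E)
    (x'' : StrongDual ℝ (StrongDual ℝ E)) {r : ℝ}
    (hr : r < Metric.infDist x'' (range (inclusionInDoubleDual ℝ E))) :
    ∃ v : StrongDual ℝ E, ‖v‖ ≤ 1 ∧ (∀ i, v (e i) = 0) ∧ r < x'' v := by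
  have := Fintype.ofFinite ι
  by_contra! h
  let L : ι → StrongDual ℝ E →ₗ[ℝ] ℝ := fun i => inclusionInDoubleDual ℝ E (e i)
  let K : Submodule ℝ (StrongDual ℝ E) := ⨅ i, LinearMap.ker (L i)
  have mem_K : ∀ v, v ∈ K ↔ ∀ i, v (e i) = 0 := by simp [K, L, Submodule.mem_iInf]
  have hle : ∀ v ∈ K, x'' v ≤ r * ‖v‖ := by
    intro v hv
    rcases eq_or_ne v 0 with rfl | hv0
    · simp
    have hw := h (‖v‖⁻¹ • v) (norm_smul_inv_norm hv0).le ((mem_K _).mp (K.smul_mem _ hv))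
    rw [map_smul, smul_eq_mul, inv_mul_le_iff₀ (norm_pos_iff.mpr hv0)] at hw
    linarith
  have hr0 : 0 ≤ r := by simpa using h 0 (by simp) (by simp)
  obtain ⟨G, hG, hGnorm⟩ := exists_extension_norm_eq K (x''.comp K.subtypeL)
  have hGr : ‖G‖ ≤ r := hGnorm ▸ ContinuousLinearMap.opNorm_le_bound _ hr0 fun v => by
    have h₁ := hle v v.2
    have h₂ := hle (-v) (K.neg_mem v.2)
    rw [map_neg, norm_neg] at h₂
    exact abs_le.mpr ⟨neg_le.mpr h₂, h₁⟩
  -- `x'' - G` vanishes on the common kernel of the `e i`, so it is a combination of them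
  have hspan : ((x'' - G : StrongDual ℝ (StrongDual ℝ E)) : StrongDual ℝ E →ₗ[ℝ] ℝ) ∈
      Submodule.span ℝ (range L) :=
    mem_span_of_iInf_ker_le_ker fun v hv => by simp [hG ⟨v, hv⟩]
  obtain ⟨c, hc⟩ := (Submodule.mem_span_range_iff_exists_fun ℝ).mp hspan
  have hmem : x'' - G ∈ range (inclusionInDoubleDual ℝ E) :=
    ⟨∑ i, c i • e i, by ext v; simpa [L] using LinearMap.congr_fun hc v⟩
  have hdist := Metric.infDist_le_dist_of_mem (x := x'') hmem
  rw [dist_eq_norm (E := StrongDual ℝ (StrongDual ℝ E)), sub_sub_cancel x'' G] at hdist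
  linarith

theorem exists_seq_tendsto_zero_lt_apply_of_notMem_range [CompleteSpace E]
    [TopologicalSpace.SeparableSpace E] {x'' : StrongDual ℝ (StrongDual ℝ E)}
    (hx : x'' ∉ range (inclusionInDoubleDual ℝ E)) :
    ∃ (v : ℕ → StrongDual ℝ E) (c : ℝ), 0 < c ∧ (∀ n, ‖v n‖ ≤ 1) ∧
      (∀ x, Tendsto (fun n => v n x) atTop (𝓝 0)) ∧ ∀ n, c < x'' (v n) := by
  have hiso : Isometry (inclusionInDoubleDual ℝ E) := (inclusionInDoubleDualLi ℝ).isometry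
  have hclosed := hiso.isClosedEmbedding.isClosed_range
  have hδ := (hclosed.notMem_iff_infDist_pos (range_nonempty _)).mp hx
  obtain ⟨e, he⟩ := TopologicalSpace.exists_dense_seq E
  choose v hv1 hv0 hvx using fun n =>
    exists_norm_le_one_forall_apply_eq_zero_lt_apply (fun i : Fin n => e i) x'' (half_lt_self hδ)
  refine ⟨v, _, half_pos hδ, hv1, fun x => ?_, hvx⟩
  -- a norm-bounded family is equicontinuous, so pointwise convergence passes from `range e` to `E`
  have hequi : Equicontinuous fun n => (v n : E → ℝ) :=
    ((NormedSpace.equicontinuous_TFAE v).out 5 1).mp (⟨1, hv1⟩ : ∃ C, ∀ n, ‖v n‖ ≤ C)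
  refine (hequi.isClosed_setOfPred_tendsto (f := 0) continuous_const).closure_subset_iff.mpr
    ?_ (he x)
  rintro _ ⟨i, rfl⟩
  exact tendsto_const_nhds.congr' (eventually_atTop.mpr ⟨i + 1, fun n hn => (hv0 n ⟨i, hn⟩).symm⟩)

theorem exists_forall_apply_lt_of_forall_exists_apply_lt {K : Set (StrongDual ℝ E)}
    (hK : Convex ℝ K) (hKne : K.Nonempty) {D : Set E} (hD : Convex ℝ D)
    (hDc : IsCompact (toWeakSpace ℝ E '' D)) {ε : ℝ} (h : ∀ d ∈ D, ∃ u ∈ K, u d < ε) :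
    ∃ u ∈ K, ∀ d ∈ D, u d < ε := by
  rcases D.eq_empty_or_nonempty with rfl | hDne
  · obtain ⟨u, hu⟩ := hKne
    exact ⟨u, hu, by simp⟩
  have heval (u : StrongDual ℝ E) :
      Continuous fun p : WeakSpace ℝ E => u ((toWeakSpace ℝ E).symm p) :=
    WeakBilin.eval_continuous _ u
  obtain ⟨t, htK, htfin, hcover⟩ := hDc.elim_finite_subcover_image (b := K)
    (c := fun u => {p | u ((toWeakSpace ℝ E).symm p) < ε})
    (fun u _ => isOpen_lt (heval u) continuous_const) (by
      rintro _ ⟨d, hd, rfl⟩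
      obtain ⟨u, hu, hud⟩ := h d hd
      exact mem_biUnion hu hud)
  have := htfin.fintype
  let Φ : E →ₗ[ℝ] t → ℝ := LinearMap.pi fun u : t => (u : StrongDual ℝ E).toLinearMap
  have hΦD : Φ '' D = (fun p (u : t) => (u : StrongDual ℝ E) ((toWeakSpace ℝ E).symm p)) ''
      (toWeakSpace ℝ E '' D) := by
    rw [image_image]
    rfl
  have hΦc : IsCompact (Φ '' D) := hΦD ▸ hDc.image (continuous_pi fun u => heval u)
  obtain ⟨w, hw, hwlt⟩ := exists_mem_stdSimplex_forall_sum_mul_lt (hD.linear_image Φ) hΦc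
    (hDne.image Φ) (ε := ε) (by
      rintro _ ⟨d, hd, rfl⟩
      obtain ⟨u, hu, hud⟩ := mem_iUnion₂.mp (hcover ⟨d, hd, rfl⟩)
      exact ⟨⟨u, hu⟩, hud⟩)
  refine ⟨∑ u : t, w u • (u : StrongDual ℝ E),
    hK.sum_mem (fun u _ => hw.1 u) hw.2 fun u _ => htK u.2, fun d hd => ?_⟩
  simpa [Φ] using hwlt (Φ d) (mem_image_of_mem Φ hd)

theorem exists_seq_mem_convexHull_image_Ici_forall_apply_lt {v : ℕ → StrongDual ℝ E} {D : Set E}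
    (hD : Convex ℝ D) (hDc : IsCompact (toWeakSpace ℝ E '' D))
    (hv : ∀ d ∈ D, Tendsto (fun n => v n d) atTop (𝓝 0)) {ε : ℝ} (hε : 0 < ε) :
    ∃ u : ℕ → StrongDual ℝ E, ∀ n, u n ∈ convexHull ℝ (v '' Ici n) ∧ ∀ d ∈ D, u n d < ε := by
  refine ⟨fun n => _, fun n => (exists_forall_apply_lt_of_forall_exists_apply_lt
    (convex_convexHull ℝ (v '' Ici n)) ((nonempty_Ici.image v).convexHull) hD hDc
    fun d hd => ?_).choose_spec⟩
  obtain ⟨m, hnm, hm⟩ :=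
    ((eventually_ge_atTop n).and ((hv d hd).eventually (gt_mem_nhds hε))).exists
  exact ⟨v m, subset_convexHull ℝ _ ⟨m, hnm, rfl⟩, hm⟩

theorem exists_seq_tendsto_zero_forall_apply_lt_of_notMem_range [CompleteSpace E]
    [TopologicalSpace.SeparableSpace E] {x'' : StrongDual ℝ (StrongDual ℝ E)}
    (hx : x'' ∉ range (inclusionInDoubleDual ℝ E)) {D : Set E} (hD : Convex ℝ D)
    (hDc : IsCompact (toWeakSpace ℝ E '' D)) {t ε : ℝ} (ht : 0 < t) (hε : 0 < ε) :
    ∃ (w : ℕ → StrongDual ℝ E) (C : ℝ), (∀ n, ‖w n‖ ≤ C) ∧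
      (∀ x, Tendsto (fun n => w n x) atTop (𝓝 0)) ∧ (∀ n, t ≤ x'' (w n)) ∧
      ∀ n, ∀ d ∈ D, w n d < ε := by
  obtain ⟨v, c, hc, hv1, hv0, hvc⟩ := exists_seq_tendsto_zero_lt_apply_of_notMem_range hx
  have hM : 0 < t / c := div_pos ht hc
  obtain ⟨u, hu⟩ := exists_seq_mem_convexHull_image_Ici_forall_apply_lt hD hDc
    (fun d _ => hv0 d) (div_pos hε hM)
  have hu1 (n : ℕ) : ‖u n‖ ≤ 1 := by
    refine mem_closedBall_zero_iff.mp (convexHull_min ?_ (convex_closedBall 0 1) (hu n).1)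
    rintro _ ⟨m, -, rfl⟩
    exact mem_closedBall_zero_iff.mpr (hv1 m)
  have huc (n : ℕ) : c ≤ x'' (u n) := by
    refine convexHull_min ?_ (convex_Ici c) (x''.apply_mem_convexHull_image (hu n).1)
    rintro _ ⟨m, -, rfl⟩
    exact (hvc m).le
  refine ⟨fun n => (t / c) • u n, t / c, fun n => ?_, fun x => ?_, fun n => ?_, fun n d hd => ?_⟩
  · rw [norm_smul, Real.norm_of_nonneg hM.le]
    exact mul_le_of_le_one_right hM.le (hu1 n)
  · have := (tendsto_of_forall_mem_convexHull_image_Ici (hv0 x) fun n =>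
      (inclusionInDoubleDual ℝ E x).apply_mem_convexHull_image (hu n).1).const_mul (t / c)
    simpa using this
  · rw [map_smul, smul_eq_mul]
    calc t = t / c * c := (div_mul_cancel₀ t hc.ne').symm
      _ ≤ t / c * x'' (u n) := mul_le_mul_of_nonneg_left (huc n) hM.le
  · rw [smul_apply, smul_eq_mul, ← lt_div_iff₀' hM]
    exact (hu n).2 d hd

theorem le_apply_of_clusterPt {S : Set E} {x'' : StrongDual ℝ (StrongDual ℝ E)}
    (h : ClusterPt (StrongDual.toWeakDual x'')
      (𝓟 ((fun a => StrongDual.toWeakDual (inclusionInDoubleDual ℝ E a)) '' S)))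
    {f : StrongDual ℝ E} {r : ℝ} (hf : ∀ a ∈ S, r ≤ f a) : r ≤ x'' f := by
  refine closure_minimal (t := {φ : WeakDual ℝ (StrongDual ℝ E) | r ≤ φ f}) ?_
    (isClosed_le continuous_const (WeakDual.eval_continuous f)) (mem_closure_iff_clusterPt.mpr h)
  rintro _ ⟨a, ha, rfl⟩
  exact hf a ha

end

theorem separation_with_directions_general {E : Type*} [NormedAddCommGroup E] [NormedSpace ℝ E]
    [CompleteSpace E] [TopologicalSpace.SeparableSpace E]
    (A : Set E)
    (x₀'' : StrongDual ℝ (StrongDual ℝ E))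
    (hcluster : ClusterPt (StrongDual.toWeakDual x₀'')
      (Filter.principal ((fun a => StrongDual.toWeakDual (inclusionInDoubleDual ℝ E a)) '' A)))
    (hx₀ : x₀'' ∉ Set.range (inclusionInDoubleDual ℝ E))
    (D : Set E) (hDconv : Convex ℝ D) (hDcpt : IsCompact (toWeakSpace ℝ E '' D))
    (h0 : (0 : E) ∉ closure (convexHull ℝ (A ∪ D))) :
    ∃ (y : ℕ → StrongDual ℝ E) (R α β : ℝ),
      0 < α ∧ α < β ∧
      (∀ n, ‖y n‖ ≤ R) ∧
      (∀ n, ∀ d ∈ D, β < y n d) ∧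
      (∀ g : StrongDual ℝ E, (∃ lam : ℕ → ℝ, (∀ n, 0 ≤ lam n) ∧ HasSum lam 1 ∧
          HasSum (fun n => lam n • y n) g) → ∀ d ∈ D, 0 < g d) ∧
      liminf (fun n => x₀'' (y n)) atTop ≤ α ∧
      (∀ x ∈ A, ∃ L : ℝ, Tendsto (fun n => y n x) atTop (nhds L) ∧ β < L) := by
  obtain ⟨f, β₀, hβ₀, hsep⟩ := geometric_hahn_banach_point_closed
    (convex_convexHull ℝ (A ∪ D)).closure isClosed_closure h0
  rw [map_zero] at hβ₀
  have hsep' : ∀ x ∈ A ∪ D, β₀ < f x := fun x hx =>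
    hsep x (subset_closure (subset_convexHull ℝ _ hx))
  have hfx₀ : β₀ ≤ x₀'' f := le_apply_of_clusterPt hcluster fun a ha => (hsep' a (.inl ha)).le
  obtain ⟨w, C, hwC, hw0, hwx₀, hwD⟩ := exists_seq_tendsto_zero_forall_apply_lt_of_notMem_range
    hx₀ hDconv hDcpt (t := x₀'' f - β₀ / 4) (by linarith) (half_pos hβ₀)
  have hyD : ∀ n, ∀ d ∈ D, β₀ / 2 < (f - w n) d := fun n d hd => by
    rw [sub_apply]
    linarith [hsep' d (.inr hd), hwD n d hd]
  have hy (n : ℕ) : ‖f - w n‖ ≤ ‖f‖ + C := (norm_sub_le _ _).trans (by gcongr; exact hwC n)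
  refine ⟨fun n => f - w n, ‖f‖ + C, β₀ / 4, β₀ / 2, by positivity, by linarith, hy, hyD, ?_, ?_,
    fun x hx => ?_⟩
  · rintro g ⟨lam, hlam0, hlam1, hg⟩ d hd
    have hgd : HasSum (fun n => lam n * (f - w n) d) (g d) := by
      simpa using hg.mapL (ContinuousLinearMap.apply ℝ ℝ d)
    have := hasSum_le (fun n => mul_le_mul_of_nonneg_left (hyD n d hd).le (hlam0 n))
      (by simpa using hlam1.mul_right (β₀ / 2)) hgd
    linarith
  · have hle (n : ℕ) : x₀'' (f - w n) ≤ β₀ / 4 := by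
      rw [map_sub]
      linarith [hwx₀ n]
    refine liminf_le_of_frequently_le (.of_forall hle)
      (isBoundedUnder_of ⟨-(‖x₀''‖ * (‖f‖ + C)), fun n => neg_le_of_abs_le ?_⟩)
    exact (x₀''.le_opNorm _).trans (mul_le_mul_of_nonneg_left (hy n) (norm_nonneg _))
  · exact ⟨f x, by simpa using tendsto_const_nhds.sub (hw0 x), by linarith [hsep' x (.inl hx)]⟩

/-- Combination of the separation lemma with convex-combination approximation uniform
on `D`: there is a sequence `(y_n*)` in a multiple of `B_{E*}` strictly greater than
`β` on `D`, with every member of its `σ`-convex hull strictly positive on `D`,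
`liminf ⟨y_n*, x₀**⟩ ≤ α < β`, and `lim_n y_n*(x)` existing and exceeding `β` on `A`. -/
theorem separation_with_directions {E : Type*} [NormedAddCommGroup E] [NormedSpace ℝ E]
    [CompleteSpace E] [TopologicalSpace.SeparableSpace E]
    (A : Set E) (hAbdd : Bornology.IsBounded A)
    (x₀'' : StrongDual ℝ (StrongDual ℝ E))
    (hcluster : ClusterPt (StrongDual.toWeakDual x₀'')
      (Filter.principal ((fun a => StrongDual.toWeakDual (inclusionInDoubleDual ℝ E a)) '' A)))
    (hx₀ : x₀'' ∉ Set.range (inclusionInDoubleDual ℝ E))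
    (D : Set E) (hDconv : Convex ℝ D) (hDcpt : IsCompact (toWeakSpace ℝ E '' D))
    (h0 : (0 : E) ∉ closure (convexHull ℝ (A ∪ D))) :
    ∃ (y : ℕ → StrongDual ℝ E) (R α β : ℝ),
      0 < α ∧ α < β ∧
      (∀ n, ‖y n‖ ≤ R) ∧
      (∀ n, ∀ d ∈ D, β < y n d) ∧
      (∀ g : StrongDual ℝ E, (∃ lam : ℕ → ℝ, (∀ n, 0 ≤ lam n) ∧ HasSum lam 1 ∧
          HasSum (fun n => lam n • y n) g) → ∀ d ∈ D, 0 < g d) ∧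
      liminf (fun n => x₀'' (y n)) atTop ≤ α ∧
      (∀ x ∈ A, ∃ L : ℝ, Tendsto (fun n => y n x) atTop (nhds L) ∧ β < L) :=
  separation_with_directions_general A x₀'' hcluster hx₀ D hDconv hDcpt h0
end
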